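/- arXiv:math/0209337 — 4 statements merged into one kernel-verified Lean document; each statement's English description precedes it below -/
import Mathlib

section
/- Let R be a commutative ring, M an R-module, and α : R → R an additive map. If U : R → R is an α-twisted derivation, i.e., U(ab) = U(a)b + α(a)U(b) for all a,b ∈ R, and the image of U contains an element x which is not a zero-divisor, then α is a ring homomorphism (multiplicative: α(ab) = α(a)α(b)). -/
/-- If `U` is an `α`-twisted derivation of a commutative ring `R` and the image of `U`
contains an element which is not a zero-divisor, then `α` is multiplicative. -/
theorem stmt_5 {R : Type*} [CommRing R]
    (α U : R → R)
    (hαadd : ∀ a b : R, α (a + b) = α a + α b)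
    (hUadd : ∀ a b : R, U (a + b) = U a + U b)
    (hU : ∀ a b : R, U (a * b) = U a * b + α a * U b)
    (x : R) (hx : x ∈ Set.range U) (hreg : ∀ a : R, x * a = 0 → a = 0) :
    ∀ a b : R, α (a * b) = α a * α b := by
  obtain ⟨c, hc⟩ := hx
  intro a b
  have h1 : U (a * b * c) = U a * (b * c) + α a * U b * c + α (a * b) * U c := by
    rw [hU, hU]; ring
  have h2 : U (a * b * c) = U a * (b * c) + α a * U b * c + α a * α b * U c := by
    rw [mul_assoc, hU a (b * c), hU b c]; ring
  have h4 : x * (α (a * b) - α a * α b) = 0 := by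
    rw [← hc]; linear_combination h2 - h1
  have := hreg _ h4
  linear_combination this
end

section
/- Let R be a commutative ring, M an R-module, and u : M → M an additive map such that there exist additive maps u^R, u_R : R → R with u(fψ) = u^R(f)u(ψ) + u_R(f)ψ for all f ∈ R, ψ ∈ M. Suppose there exists ψ ∈ M such that u(ψ) and ψ are linearly independent over R (i.e., f u(ψ) + g ψ = 0 implies f = g = 0). Then u^R is a ring homomorphism and u_R is a u^R-twisted derivation of R: u_R(fg) = u_R(f)g + u^R(f)u_R(g). -/
/-- If `u` is a pseudo-linear endomorphism of an `R`-module `M`, with associated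
additive maps `uR` (the twist) and `udR` (the derivation part), and there is `ψ ∈ M`
such that `u ψ` and `ψ` are linearly independent over `R`, then `uR` is multiplicative
and `udR` is a `uR`-twisted derivation of `R`. -/
theorem stmt_9 {R M : Type*} [CommRing R] [AddCommGroup M] [Module R M]
    (u : M → M) (uR udR : R → R)
    (hu : ∀ x y : M, u (x + y) = u x + u y)
    (huR : ∀ a b : R, uR (a + b) = uR a + uR b)
    (hudR : ∀ a b : R, udR (a + b) = udR a + udR b)
    (hps : ∀ (f : R) (ψ : M), u (f • ψ) = uR f • u ψ + udR f • ψ)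
    (ψ : M) (hind : ∀ f g : R, f • u ψ + g • ψ = 0 → f = 0 ∧ g = 0) :
    (∀ f g : R, uR (f * g) = uR f * uR g) ∧
    (∀ f g : R, udR (f * g) = udR f * g + uR f * udR g) := by
  have key : ∀ f g : R, uR (f * g) = uR f * uR g ∧
      udR (f * g) = udR f * g + uR f * udR g := by
    intro f g
    have h1 : u ((f * g) • ψ) = uR (f * g) • u ψ + udR (f * g) • ψ := hps _ _
    have h2 : u ((f * g) • ψ) =
        (uR f * uR g) • u ψ + (udR f * g + uR f * udR g) • ψ := by
      rw [mul_smul, hps f (g • ψ), hps g ψ, smul_add]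
      simp only [smul_smul, add_smul]
      module
    have h3 : (uR (f * g) - uR f * uR g) • u ψ +
        (udR (f * g) - (udR f * g + uR f * udR g)) • ψ = 0 := by
      have heq := h1.symm.trans h2
      simp only [sub_smul]
      linear_combination (norm := module) heq
    obtain ⟨ha, hb⟩ := hind _ _ h3
    exact ⟨sub_eq_zero.mp ha, sub_eq_zero.mp hb⟩
  exact ⟨fun f g => (key f g).1, fun f g => (key f g).2⟩
end

section
/- Let g be a Lie algebra over ℝ acting on a commutative ℝ-algebra C by derivations, i.e., there is a Lie algebra homomorphism X ↦ X_C from g into the Lie algebra of derivations of C. Then the C-module C ⊗_ℝ g of C-valued points (functions V : valued in g, modeled as C ⊗ g) carries a Lie bracket defined on elements V, W by [V, W] = V_C(W) − W_C(V) + [V, W]•, where for V = Σ fᵢ ⊗ Xᵢ the derivation V_C = Σ fᵢ (Xᵢ)_C acts componentwise on W, and [V,W]• is the C-bilinear extension of the bracket of g. This bracket is ℝ-bilinear, alternating, satisfies the Jacobi identity, and satisfies [V, fW] = f[V,W] + V_C(f)W for f ∈ C. -/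
/-!
The bracket is the `C`-bilinear extension `⁅V, W⁆` of the bracket of `g` (the Lie algebra
structure of the base change `C ⊗ g`) plus the antisymmetric term `V_C(W) - W_C(V)`, where `V_C`
acts on the `C`-factor. Alternation is then immediate, and the Leibniz rule follows because
`V ↦ V_C` is `C`-linear with values in derivations. Both sides of the Jacobi identity are
trilinear, so it suffices to check it on pure tensors, where it is an identity in `C` that uses
`ρ ⁅X, Y⁆ = ⁅ρ X, ρ Y⁆`.
-/

open TensorProduct

namespace LieAlgebra.ActionAlgebroid

variable {R C g : Type*} [CommRing R] [CommRing C] [Algebra R C] [LieRing g] [LieAlgebra R g]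
  (ρ : g →ₗ[R] Derivation R C C)

noncomputable def anchor : C ⊗[R] g →ₗ[C] Derivation R C C :=
  AlgebraTensorModule.lift (LinearMap.toSpanSingleton C _ ρ)

@[simp] lemma anchor_tmul (f : C) (X : g) : anchor ρ (f ⊗ₜ X) = f • ρ X := rfl

noncomputable def anchorAction : C ⊗[R] g →ₗ[R] C ⊗[R] g →ₗ[R] C ⊗[R] g where
  toFun V := LinearMap.rTensor g (anchor ρ V : C →ₗ[R] C)
  map_add' V W := by ext; simp
  map_smul' r V := by ext; simp

@[simp] lemma anchorAction_tmul (f k : C) (X Y : g) :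
    anchorAction ρ (f ⊗ₜ X) (k ⊗ₜ Y) = (f * ρ X k) ⊗ₜ Y := rfl

noncomputable def bracket : C ⊗[R] g →ₗ[R] C ⊗[R] g →ₗ[R] C ⊗[R] g :=
  (ad R (C ⊗[R] g) : C ⊗[R] g →ₗ[R] Module.End R (C ⊗[R] g))
    + anchorAction ρ - (anchorAction ρ).flip

lemma bracket_apply (V W : C ⊗[R] g) :
    bracket ρ V W = ⁅V, W⁆ + anchorAction ρ V W - anchorAction ρ W V := rfl

@[simp] lemma bracket_tmul (f k : C) (X Y : g) :
    bracket ρ (f ⊗ₜ X) (k ⊗ₜ Y)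
      = (f * k) ⊗ₜ ⁅X, Y⁆ + (f * ρ X k) ⊗ₜ Y - (k * ρ Y f) ⊗ₜ X := rfl

lemma bracket_self (V : C ⊗[R] g) : bracket ρ V V = 0 := by
  rw [bracket_apply, lie_self, zero_add, sub_self]

lemma anchorAction_smul_left (f : C) (V W : C ⊗[R] g) :
    anchorAction ρ (f • V) W = f • anchorAction ρ V W := by
  induction V using TensorProduct.induction_on with
  | zero => simp
  | add V₁ V₂ h₁ h₂ => simp only [smul_add, map_add, LinearMap.add_apply, h₁, h₂]
  | tmul h X =>
    induction W using TensorProduct.induction_on with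
    | zero => simp
    | add W₁ W₂ h₁ h₂ => simp only [smul_add, map_add, h₁, h₂]
    | tmul k Y =>
      rw [smul_tmul', smul_eq_mul, anchorAction_tmul, anchorAction_tmul, smul_tmul', smul_eq_mul,
        mul_assoc]

lemma anchorAction_smul_right (f : C) (V W : C ⊗[R] g) :
    anchorAction ρ V (f • W) = f • anchorAction ρ V W + anchor ρ V f • W := by
  induction V using TensorProduct.induction_on with
  | zero => simp
  | add V₁ V₂ h₁ h₂ =>
    simp only [map_add, LinearMap.add_apply, h₁, h₂, Derivation.add_apply, add_smul, smul_add]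
    abel
  | tmul h X =>
    induction W using TensorProduct.induction_on with
    | zero => simp
    | add W₁ W₂ h₁ h₂ => simp only [smul_add, map_add, h₁, h₂]; abel
    | tmul k Y =>
      simp only [smul_tmul', smul_eq_mul, anchorAction_tmul, anchor_tmul, Derivation.leibniz,
        Derivation.smul_apply, ← add_tmul]
      ring_nf

lemma bracket_smul_right (f : C) (V W : C ⊗[R] g) :
    bracket ρ V (f • W) = f • bracket ρ V W + anchor ρ V f • W := by
  rw [bracket_apply, bracket_apply, lie_smul, anchorAction_smul_left, anchorAction_smul_right]
  module

/-- Lets `module` treat the vectors `1 ⊗ X` as atoms. -/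
lemma tmul_eq_smul_mk_one (f : C) (X : g) : f ⊗ₜ[R] X = f • TensorProduct.mk R C g 1 X := by
  rw [mk_apply, smul_tmul', smul_eq_mul, mul_one]

variable {ρ} in
lemma bracket_jacobi_tmul (hρ : ∀ X Y : g, ρ ⁅X, Y⁆ = ⁅ρ X, ρ Y⁆) (f k l : C) (X Y Z : g) :
    bracket ρ (f ⊗ₜ X) (bracket ρ (k ⊗ₜ Y) (l ⊗ₜ Z))
      = bracket ρ (bracket ρ (f ⊗ₜ X) (k ⊗ₜ Y)) (l ⊗ₜ Z)
        + bracket ρ (k ⊗ₜ Y) (bracket ρ (f ⊗ₜ X) (l ⊗ₜ Z)) := by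
  simp only [bracket_tmul, map_add, map_sub, LinearMap.add_apply, LinearMap.sub_apply,
    Derivation.leibniz, smul_eq_mul, hρ, Derivation.commutator_apply, lie_lie]
  simp only [← lie_skew X Y, ← lie_skew X Z, ← lie_skew Y Z, tmul_eq_smul_mk_one, map_neg,
    map_sub]
  module

variable {ρ} in
lemma bracket_jacobi (hρ : ∀ X Y : g, ρ ⁅X, Y⁆ = ⁅ρ X, ρ Y⁆) (U V W : C ⊗[R] g) :
    bracket ρ U (bracket ρ V W) = bracket ρ (bracket ρ U V) W + bracket ρ V (bracket ρ U W) := by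
  induction U using TensorProduct.induction_on with
  | zero => simp
  | add U₁ U₂ h₁ h₂ => simp only [map_add, LinearMap.add_apply, h₁, h₂]; abel
  | tmul f X =>
    induction V using TensorProduct.induction_on with
    | zero => simp
    | add V₁ V₂ h₁ h₂ => simp only [map_add, LinearMap.add_apply, h₁, h₂]; abel
    | tmul k Y =>
      induction W using TensorProduct.induction_on with
      | zero => simp
      | add W₁ W₂ h₁ h₂ => simp only [map_add, h₁, h₂]; abel
      | tmul l Z => exact bracket_jacobi_tmul hρ f k l X Y Z

end LieAlgebra.ActionAlgebroid

open LieAlgebra.ActionAlgebroid in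
/-- Given an action of a real Lie algebra `g` on a commutative `ℝ`-algebra `C` by
derivations, the `C`-module `C ⊗ g` carries the action bracket
`[f⊗X, k⊗Y] = fk ⊗ [X,Y] + f·X_C(k) ⊗ Y − k·Y_C(f) ⊗ X`, which is `ℝ`-bilinear,
alternating, satisfies the Jacobi identity, and the Leibniz rule with respect to the
anchor `a(f⊗X) = f • X_C`. -/
theorem stmt_10 {C g : Type*} [CommRing C] [Algebra ℝ C]
    [LieRing g] [LieAlgebra ℝ g]
    (ρ : g →ₗ[ℝ] Derivation ℝ C C)
    (hρ : ∀ X Y : g, ρ ⁅X, Y⁆ = ⁅ρ X, ρ Y⁆) :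
    ∃ (B : C ⊗[ℝ] g →ₗ[ℝ] C ⊗[ℝ] g →ₗ[ℝ] C ⊗[ℝ] g)
      (a : C ⊗[ℝ] g →ₗ[ℝ] Derivation ℝ C C),
      (∀ (f : C) (X : g), a (f ⊗ₜ[ℝ] X) = f • ρ X) ∧
      (∀ (f k : C) (X Y : g),
          B (f ⊗ₜ[ℝ] X) (k ⊗ₜ[ℝ] Y)
            = (f * k) ⊗ₜ[ℝ] ⁅X, Y⁆ + (f * ρ X k) ⊗ₜ[ℝ] Y - (k * ρ Y f) ⊗ₜ[ℝ] X) ∧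
      (∀ V : C ⊗[ℝ] g, B V V = 0) ∧
      (∀ U V W : C ⊗[ℝ] g, B U (B V W) = B (B U V) W + B V (B U W)) ∧
      (∀ (V W : C ⊗[ℝ] g) (f : C), B V (f • W) = f • B V W + a V f • W) :=
  ⟨bracket ρ, (anchor ρ).restrictScalars ℝ, anchor_tmul ρ, bracket_tmul ρ, bracket_self ρ,
    bracket_jacobi hρ, fun V W f => bracket_smul_right ρ f V W⟩
end

section
/- Let R be a commutative ring, M an R-module, and let D(M) denote the Lie algebra of pairs (D, d) with d a derivation of R and D an additive endomorphism of M with D(fψ) = fD(ψ) + d(f)ψ. Let g be a Lie algebra with an infinitesimal action X ↦ X_R on R by derivations. Then there is a bijection between (a) Lie algebra homomorphisms ρ : g → D(M) whose associated derivation of (ρ(X)) equals X_R for all X, and (b) Lie–Rinehart algebra morphisms σ from the action Lie–Rinehart algebra R ⊗ g (with anchor f⊗X ↦ f·X_R and action bracket) to D(M) which are R-linear and anchor-preserving; the correspondence is σ(f ⊗ X) = f · ρ(X). -/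
open TensorProduct

/-- Auxiliary: the `R`-linear extension of `f ⊗ X ↦ f • ρ X`. -/
noncomputable def stmt12.auxF {R M g : Type*} [CommRing R] [Algebra ℝ R]
    [AddCommGroup M] [Module R M] [Module ℝ M] [IsScalarTower ℝ R M]
    [LieRing g] [LieAlgebra ℝ g]
    (ρ : g → (M →+ M) × (R →+ R))
    (hadd : ∀ X Y : g, ρ (X + Y) = ρ X + ρ Y)
    (hsmul : ∀ (r : ℝ) (X : g), ρ (r • X) = r • ρ X) :
    R ⊗[ℝ] g →ₗ[R] (M →+ M) × (R →+ R) :=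
  TensorProduct.AlgebraTensorModule.lift
    { toFun := fun f =>
        { toFun := fun X => f • ρ X
          map_add' := fun X Y => by
            show f • ρ (X + Y) = f • ρ X + f • ρ Y
            rw [hadd, smul_add]
          map_smul' := fun r X => by
            show f • ρ (r • X) = r • (f • ρ X)
            rw [hsmul]
            exact smul_comm f r (ρ X) }
      map_add' := fun f k => LinearMap.ext fun X => add_smul f k (ρ X)
      map_smul' := fun c f => LinearMap.ext fun X => mul_smul c f (ρ X) }

lemma stmt12.auxF_tmul {R M g : Type*} [CommRing R] [Algebra ℝ R]
    [AddCommGroup M] [Module R M] [Module ℝ M] [IsScalarTower ℝ R M]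
    [LieRing g] [LieAlgebra ℝ g]
    (ρ : g → (M →+ M) × (R →+ R))
    (hadd : ∀ X Y : g, ρ (X + Y) = ρ X + ρ Y)
    (hsmul : ∀ (r : ℝ) (X : g), ρ (r • X) = r • ρ X)
    (f : R) (X : g) : stmt12.auxF ρ hadd hsmul (f ⊗ₜ[ℝ] X) = f • ρ X :=
  TensorProduct.AlgebraTensorModule.lift_tmul _ f X

set_option maxHeartbeats 1000000 in
/-- Derivative representations of a Lie algebra `g` on an `R`-module `M`, associated to
a given infinitesimal action `θ` of `g` on `R` by derivations, are in bijection with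
representations of the action Lie–Rinehart algebra `R ⊗ g` (with anchor
`f⊗X ↦ f·θ X` and action bracket `B`) on `M`; the correspondence is
`σ (f ⊗ X) = f • ρ X`. -/
theorem stmt_12 {R M g : Type*} [CommRing R] [Algebra ℝ R]
    [AddCommGroup M] [Module R M] [Module ℝ M] [IsScalarTower ℝ R M]
    [LieRing g] [LieAlgebra ℝ g]
    -- the infinitesimal action of `g` on `R` by derivations
    (θ : g → R →+ R)
    (hθder : ∀ (X : g) (f k : R), θ X (f * k) = f * θ X k + k * θ X f)
    (hθadd : ∀ X Y : g, θ (X + Y) = θ X + θ Y)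
    (hθsmul : ∀ (r : ℝ) (X : g) (f : R), θ (r • X) f = r • θ X f)
    (hθlie : ∀ (X Y : g) (f : R), θ ⁅X, Y⁆ f = θ X (θ Y f) - θ Y (θ X f))
    -- the action bracket on `R ⊗ g`
    (B : R ⊗[ℝ] g →ₗ[ℝ] R ⊗[ℝ] g →ₗ[ℝ] R ⊗[ℝ] g)
    (hB : ∀ (f k : R) (X Y : g),
        B (f ⊗ₜ[ℝ] X) (k ⊗ₜ[ℝ] Y)
          = (f * k) ⊗ₜ[ℝ] ⁅X, Y⁆ + (f * θ X k) ⊗ₜ[ℝ] Y - (k * θ Y f) ⊗ₜ[ℝ] X) :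
    ∃ e : -- derivative representations of `g` on `M` over the action `θ`
        {ρ : g → (M →+ M) × (R →+ R) //
          (∀ (X : g) (f : R) (ψ : M), (ρ X).1 (f • ψ) = f • (ρ X).1 ψ + (ρ X).2 f • ψ) ∧
          (∀ X : g, (ρ X).2 = θ X) ∧
          (∀ X Y : g, ρ (X + Y) = ρ X + ρ Y) ∧
          (∀ (r : ℝ) (X : g), ρ (r • X) = r • ρ X) ∧
          (∀ X Y : g,
            ρ ⁅X, Y⁆ = ((ρ X).1.comp (ρ Y).1 - (ρ Y).1.comp (ρ X).1,
                        (ρ X).2.comp (ρ Y).2 - (ρ Y).2.comp (ρ X).2))} ≃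
        -- representations of the action Lie--Rinehart algebra `R ⊗ g` on `M`
        {σ : R ⊗[ℝ] g →ₗ[R] (M →+ M) × (R →+ R) //
          (∀ (v : R ⊗[ℝ] g) (f : R) (ψ : M),
              (σ v).1 (f • ψ) = f • (σ v).1 ψ + (σ v).2 f • ψ) ∧
          (∀ (f : R) (X : g), (σ (f ⊗ₜ[ℝ] X)).2 = f • θ X) ∧
          (∀ v w : R ⊗[ℝ] g,
            σ (B v w) = ((σ v).1.comp (σ w).1 - (σ w).1.comp (σ v).1,
                         (σ v).2.comp (σ w).2 - (σ w).2.comp (σ v).2))},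
      ∀ (ρ) (f : R) (X : g), (e ρ).val (f ⊗ₜ[ℝ] X) = f • ρ.val X := by
  classical
  have hθone : ∀ X : g, θ X 1 = 0 := by
    intro X
    have h := hθder X 1 1
    simp only [one_mul, mul_one] at h
    exact left_eq_add.mp h
  let F := fun (ρ : {ρ : g → (M →+ M) × (R →+ R) //
          (∀ (X : g) (f : R) (ψ : M), (ρ X).1 (f • ψ) = f • (ρ X).1 ψ + (ρ X).2 f • ψ) ∧
          (∀ X : g, (ρ X).2 = θ X) ∧
          (∀ X Y : g, ρ (X + Y) = ρ X + ρ Y) ∧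
          (∀ (r : ℝ) (X : g), ρ (r • X) = r • ρ X) ∧
          (∀ X Y : g,
            ρ ⁅X, Y⁆ = ((ρ X).1.comp (ρ Y).1 - (ρ Y).1.comp (ρ X).1,
                        (ρ X).2.comp (ρ Y).2 - (ρ Y).2.comp (ρ X).2))}) =>
    stmt12.auxF ρ.val ρ.prop.2.2.1 ρ.prop.2.2.2.1
  have Ftmul : ∀ ρ (f : R) (X : g), F ρ (f ⊗ₜ[ℝ] X) = f • ρ.val X := fun ρ f X =>
    stmt12.auxF_tmul _ _ _ f X

  refine ⟨⟨fun ρ => ⟨F ρ, ?_, ?_, ?_⟩, fun σ => ⟨fun X => σ.val ((1:R) ⊗ₜ[ℝ] X), ?_, ?_, ?_, ?_, ?_⟩,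
      ?_, ?_⟩, fun ρ f X => Ftmul ρ f X⟩
  · -- Leibniz for F ρ
    intro v
    induction v using TensorProduct.induction_on with
    | zero => intro f ψ; simp
    | tmul k X =>
      intro f ψ
      rw [Ftmul]
      simp only [Prod.smul_fst, Prod.smul_snd, AddMonoidHom.smul_apply]
      rw [ρ.prop.1 X f ψ, smul_add, smul_comm k f, smul_smul k ((ρ.val X).2 f) ψ]
      rw [smul_eq_mul]
    | add v w hv hw =>
      intro f ψ
      simp only [map_add, Prod.fst_add, Prod.snd_add, AddMonoidHom.add_apply, hv, hw,
        smul_add, add_smul]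
      abel
  · -- anchor for F ρ
    intro f X
    rw [Ftmul]
    simp only [Prod.smul_snd, ρ.prop.2.1 X]
  · -- bracket for F ρ
    have hlie := ρ.prop.2.2.2.2
    have hDX := ρ.prop.1
    have hd := ρ.prop.2.1
    have key : ∀ (f k : R) (X Y : g),
        F ρ (B (f ⊗ₜ[ℝ] X) (k ⊗ₜ[ℝ] Y))
          = ((F ρ (f ⊗ₜ[ℝ] X)).1.comp (F ρ (k ⊗ₜ[ℝ] Y)).1
              - (F ρ (k ⊗ₜ[ℝ] Y)).1.comp (F ρ (f ⊗ₜ[ℝ] X)).1,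
             (F ρ (f ⊗ₜ[ℝ] X)).2.comp (F ρ (k ⊗ₜ[ℝ] Y)).2
              - (F ρ (k ⊗ₜ[ℝ] Y)).2.comp (F ρ (f ⊗ₜ[ℝ] X)).2) := by
      intro f k X Y
      rw [hB, map_sub, map_add]
      simp only [Ftmul]
      rw [hlie X Y]
      ext ψ
      · simp only [Prod.fst_add, Prod.fst_sub, Prod.smul_fst, Prod.snd_add, Prod.snd_sub,
          Prod.smul_snd, AddMonoidHom.add_apply, AddMonoidHom.sub_apply,
          AddMonoidHom.smul_apply, AddMonoidHom.comp_apply]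
        rw [hDX X k, hDX Y f, hd X, hd Y]
        simp only [smul_sub, smul_add, smul_smul]
        rw [mul_comm k f]
        abel
      · simp only [Prod.fst_add, Prod.fst_sub, Prod.smul_fst, Prod.snd_add, Prod.snd_sub,
          Prod.smul_snd, AddMonoidHom.add_apply, AddMonoidHom.sub_apply,
          AddMonoidHom.smul_apply, AddMonoidHom.comp_apply, hd, smul_eq_mul]
        rw [hθder X k (θ Y ψ), hθder Y f (θ X ψ)]
        ring
    intro v w
    induction v using TensorProduct.induction_on with
    | zero =>
      simp only [map_zero, LinearMap.zero_apply, Prod.fst_zero, Prod.snd_zero,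
        AddMonoidHom.zero_comp, AddMonoidHom.comp_zero, sub_self]
      rfl
    | tmul f X =>
      induction w using TensorProduct.induction_on with
      | zero =>
        simp only [map_zero, Prod.fst_zero, Prod.snd_zero,
          AddMonoidHom.zero_comp, AddMonoidHom.comp_zero, sub_self]
        rfl
      | tmul k Y => exact key f k X Y
      | add w₁ w₂ h1 h2 =>
        rw [map_add, map_add, h1, h2]
        ext ψ <;>
          simp only [Prod.fst_add, Prod.snd_add, Prod.mk_add_mk, AddMonoidHom.add_apply,
            AddMonoidHom.sub_apply, AddMonoidHom.comp_apply, map_add] <;>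
          abel
    | add v₁ v₂ h1 h2 =>
      rw [map_add, LinearMap.add_apply, map_add, h1, h2]
      ext ψ <;>
        simp only [Prod.fst_add, Prod.snd_add, Prod.mk_add_mk, AddMonoidHom.add_apply,
          AddMonoidHom.sub_apply, AddMonoidHom.comp_apply, map_add] <;>
        abel
  · -- backward: Leibniz
    exact fun X => σ.prop.1 ((1:R) ⊗ₜ[ℝ] X)
  · -- backward: anchor
    intro X
    rw [σ.prop.2.1 1 X, one_smul]
  · -- backward: additivity
    intro X Y
    dsimp only
    rw [TensorProduct.tmul_add, map_add]
  · -- backward: real smul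
    intro r X
    dsimp only
    rw [TensorProduct.tmul_smul, ← algebraMap_smul R r ((1:R) ⊗ₜ[ℝ] X), map_smul,
      algebraMap_smul]
  · -- backward: bracket
    intro X Y
    dsimp only
    have h := σ.prop.2.2 ((1:R) ⊗ₜ[ℝ] X) ((1:R) ⊗ₜ[ℝ] Y)
    rw [hB] at h
    simp only [hθone, mul_zero, mul_one, one_mul, TensorProduct.zero_tmul, add_zero,
      sub_zero] at h
    exact h
  · -- left inverse
    intro ρ
    apply Subtype.ext
    funext X
    show F ρ ((1:R) ⊗ₜ[ℝ] X) = ρ.val X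
    rw [Ftmul, one_smul]
  · -- right inverse
    intro σ
    apply Subtype.ext
    apply LinearMap.ext
    intro v
    induction v using TensorProduct.induction_on with
    | zero => simp only [map_zero]
    | tmul f X =>
      show F _ (f ⊗ₜ[ℝ] X) = σ.val (f ⊗ₜ[ℝ] X)
      rw [Ftmul]
      show f • σ.val ((1:R) ⊗ₜ[ℝ] X) = σ.val (f ⊗ₜ[ℝ] X)
      rw [← map_smul, TensorProduct.smul_tmul', smul_eq_mul, mul_one]
    | add v w hv hw =>
      show F _ (v + w) = σ.val (v + w)
      rw [map_add, map_add, hv, hw]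
end
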